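/- arXiv:2402.08395 — 2 statements merged into one kernel-verified Lean document; each statement's English description precedes it below -/
import Mathlib

section
/- The van Albada limiter ψ(R) = (R² + R)/(R² + 1) satisfies (1 - √2)/2 ≤ ψ(R) ≤ (1 + √2)/2 for all real R. -/
theorem vanAlbada_bounds (R : ℝ) :
    (1 - Real.sqrt 2) / 2 ≤ (R ^ 2 + R) / (R ^ 2 + 1) ∧
      (R ^ 2 + R) / (R ^ 2 + 1) ≤ (1 + Real.sqrt 2) / 2 := by
  have h2 : Real.sqrt 2 ^ 2 = 2 := Real.sq_sqrt (by norm_num)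
  have h1 : (1:ℝ) ≤ Real.sqrt 2 := by
    nlinarith [Real.sqrt_nonneg 2]
  have hd : (0:ℝ) < R ^ 2 + 1 := by positivity
  constructor
  · rw [div_le_div_iff₀ (by norm_num) hd]
    have key : (R^2+R)*2 - (1-Real.sqrt 2)*(R^2+1)
        = (1+Real.sqrt 2)*(R-(1-Real.sqrt 2))^2 := by
      linear_combination (1 - Real.sqrt 2 - 2*R) * h2
    nlinarith [mul_nonneg (by linarith : (0:ℝ) ≤ 1 + Real.sqrt 2) (sq_nonneg (R - (1 - Real.sqrt 2)))]
  · rw [div_le_div_iff₀ hd (by norm_num)]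
    nlinarith [mul_nonneg (by linarith : (0:ℝ) ≤ Real.sqrt 2 - 1) (sq_nonneg (R - (1 + Real.sqrt 2)))]
end

section
/- One-dimensional Harten lemma: suppose u_i^{n+1} = u_i^n + C_{i+1/2}(u_{i+1}^n - u_i^n) - D_{i-1/2}(u_i^n - u_{i-1}^n) for all i ∈ ℤ, where C_{i+1/2} ≥ 0, D_{i+1/2} ≥ 0 and C_{i+1/2} + D_{i+1/2} ≤ 1 for all i, and (u_i^n) has finite total variation with only finitely many nonzero differences. Then the total variation Σ_i |u_{i+1}^{n+1} - u_i^{n+1}| ≤ Σ_i |u_{i+1}^n - u_i^n|. -/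
theorem harten_tvd_lemma
    (u v : ℤ → ℝ) (C D : ℤ → ℝ)
    (hC : ∀ i : ℤ, 0 ≤ C i) (hD : ∀ i : ℤ, 0 ≤ D i)
    (hCD : ∀ i : ℤ, C i + D i ≤ 1)
    (hfin : {i : ℤ | u (i + 1) - u i ≠ 0}.Finite)
    (hupdate : ∀ i : ℤ,
      v i = u i + C i * (u (i + 1) - u i) - D (i - 1) * (u i - u (i - 1))) :
    ∑' i : ℤ, |v (i + 1) - v i| ≤ ∑' i : ℤ, |u (i + 1) - u i| := by
  classical
  set Δ : ℤ → ℝ := fun i => u (i + 1) - u i with hΔdef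
  set f : ℤ → ℝ := fun i => |Δ i| with hfdef
  set g : ℤ → ℝ := fun i => |v (i + 1) - v i| with hgdef
  set S : Finset ℤ := hfin.toFinset with hSdef
  have hmemS : ∀ i : ℤ, i ∈ S ↔ Δ i ≠ 0 := by
    intro i; simp [hSdef, Set.Finite.mem_toFinset, hΔdef]
  have hfzero : ∀ i : ℤ, i ∉ S → f i = 0 := by
    intro i hi
    have : Δ i = 0 := by by_contra h; exact hi ((hmemS i).2 h)
    simp [hfdef, this]
  set T : Finset ℤ := S ∪ S.image (· - 1) ∪ S.image (· + 1) with hTdef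
  have hST : S ⊆ T := by intro x hx; simp [hTdef]; tauto
  -- key algebraic identity
  have hΔv : ∀ i : ℤ, v (i + 1) - v i
      = (1 - C i - D i) * Δ i + C (i + 1) * Δ (i + 1) + D (i - 1) * Δ (i - 1) := by
    intro i
    have h1 := hupdate (i + 1)
    have h2 := hupdate i
    have e1 : i + 1 - 1 = i := by ring
    have e2 : i - 1 + 1 = i := by ring
    rw [h1, h2, e1]
    simp only [hΔdef, e2]
    ring
  -- pointwise inequality
  have hkey : ∀ i : ℤ, g i ≤ (1 - C i - D i) * f i + C (i + 1) * f (i + 1)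
      + D (i - 1) * f (i - 1) := by
    intro i
    have hcoeff : 0 ≤ 1 - C i - D i := by have := hCD i; linarith
    calc g i = |(1 - C i - D i) * Δ i + C (i + 1) * Δ (i + 1) + D (i - 1) * Δ (i - 1)| := by
          rw [hgdef]; simp only []; rw [hΔv i]
      _ ≤ |(1 - C i - D i) * Δ i + C (i + 1) * Δ (i + 1)| + |D (i - 1) * Δ (i - 1)| :=
          abs_add_le _ _
      _ ≤ |(1 - C i - D i) * Δ i| + |C (i + 1) * Δ (i + 1)| + |D (i - 1) * Δ (i - 1)| := by
          have := abs_add_le ((1 - C i - D i) * Δ i) (C (i + 1) * Δ (i + 1))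
          linarith
      _ = (1 - C i - D i) * f i + C (i + 1) * f (i + 1) + D (i - 1) * f (i - 1) := by
          simp [hfdef, abs_mul, abs_of_nonneg hcoeff, abs_of_nonneg (hC (i + 1)),
            abs_of_nonneg (hD (i - 1))]
  have hgzero : ∀ i : ℤ, i ∉ T → g i = 0 := by
    intro i hi
    simp only [hTdef, Finset.mem_union, Finset.mem_image, not_or, not_exists] at hi
    obtain ⟨⟨hi1, hi2⟩, hi3⟩ := hi
    have hΔi : Δ i = 0 := by by_contra h; exact hi1 ((hmemS i).2 h)
    have hΔip : Δ (i + 1) = 0 := by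
      by_contra h
      have : i + 1 ∈ S := (hmemS _).2 h
      have := hi2 (i + 1)
      simp at this
      exact this ‹i + 1 ∈ S›
    have hΔim : Δ (i - 1) = 0 := by
      by_contra h
      have : i - 1 ∈ S := (hmemS _).2 h
      have := hi3 (i - 1)
      simp at this
      exact this ‹i - 1 ∈ S›
    have : v (i + 1) - v i = 0 := by rw [hΔv i, hΔi, hΔip, hΔim]; ring
    simp [hgdef, this]
  -- tsums to finite sums
  have htg : ∑' i : ℤ, g i = ∑ i ∈ T, g i := tsum_eq_sum hgzero
  have htf : ∑' i : ℤ, f i = ∑ i ∈ T, f i :=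
    tsum_eq_sum (fun i hi => hfzero i (fun h => hi (hST h)))
  have hgoal : (∑' i : ℤ, |v (i + 1) - v i|) = ∑' i : ℤ, g i := rfl
  have hgoal2 : (∑' i : ℤ, |u (i + 1) - u i|) = ∑' i : ℤ, f i := rfl
  rw [hgoal, hgoal2, htg, htf]
  -- main estimate on finite sums
  have step1 : ∑ i ∈ T, g i ≤ ∑ i ∈ T, ((1 - C i - D i) * f i + C (i + 1) * f (i + 1)
      + D (i - 1) * f (i - 1)) := Finset.sum_le_sum (fun i _ => hkey i)
  have hsplit : ∑ i ∈ T, ((1 - C i - D i) * f i + C (i + 1) * f (i + 1)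
      + D (i - 1) * f (i - 1))
      = (∑ i ∈ T, (1 - C i - D i) * f i) + (∑ i ∈ T, C (i + 1) * f (i + 1))
        + (∑ i ∈ T, D (i - 1) * f (i - 1)) := by
    rw [← Finset.sum_add_distrib, ← Finset.sum_add_distrib]
  -- reduce each sum to a sum over S
  have hA : ∑ i ∈ T, (1 - C i - D i) * f i = ∑ i ∈ S, (1 - C i - D i) * f i := by
    symm
    apply Finset.sum_subset hST
    intro x _ hx
    rw [hfzero x hx]; ring
  have hB : ∑ i ∈ T, C (i + 1) * f (i + 1) = ∑ j ∈ S, C j * f j := by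
    have himg : ∑ j ∈ T.image (· + 1), C j * f j = ∑ i ∈ T, C (i + 1) * f (i + 1) := by
      rw [Finset.sum_image]
      intro a _ b _ hab
      simpa using hab
    rw [← himg]
    symm
    apply Finset.sum_subset
    · intro s hs
      have hs1 : s - 1 ∈ T := by
        simp only [hTdef, Finset.mem_union, Finset.mem_image]
        left; right; exact ⟨s, hs, rfl⟩
      simp only [Finset.mem_image]
      exact ⟨s - 1, hs1, by ring⟩
    · intro x _ hx
      rw [hfzero x hx]; ring
  have hCsum : ∑ i ∈ T, D (i - 1) * f (i - 1) = ∑ j ∈ S, D j * f j := by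
    have himg : ∑ j ∈ T.image (· - 1), D j * f j = ∑ i ∈ T, D (i - 1) * f (i - 1) := by
      rw [Finset.sum_image]
      intro a _ b _ hab
      simpa using sub_left_injective hab
    rw [← himg]
    symm
    apply Finset.sum_subset
    · intro s hs
      have hs1 : s + 1 ∈ T := by
        simp only [hTdef, Finset.mem_union, Finset.mem_image]
        right; exact ⟨s, hs, rfl⟩
      simp only [Finset.mem_image]
      exact ⟨s + 1, hs1, by ring⟩
    · intro x _ hx
      rw [hfzero x hx]; ring
  have hcollect : (∑ i ∈ S, (1 - C i - D i) * f i) + (∑ j ∈ S, C j * f j)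
      + (∑ j ∈ S, D j * f j) = ∑ i ∈ S, f i := by
    rw [← Finset.sum_add_distrib, ← Finset.sum_add_distrib]
    apply Finset.sum_congr rfl
    intro i _
    ring
  have hSf : ∑ i ∈ S, f i = ∑ i ∈ T, f i := by
    apply Finset.sum_subset hST
    intro x _ hx
    exact hfzero x hx
  calc ∑ i ∈ T, g i
      ≤ (∑ i ∈ T, (1 - C i - D i) * f i) + (∑ i ∈ T, C (i + 1) * f (i + 1))
        + (∑ i ∈ T, D (i - 1) * f (i - 1)) := by rw [← hsplit]; exact step1
    _ = ∑ i ∈ T, f i := by rw [hA, hB, hCsum, hcollect, hSf]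
end
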